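/- For every bounded linear operator A on a complex Hilbert space and every real number r ≥ 1, (1/4)‖A*A + AA*‖ ≤ (1/2)( (1/2)‖Re(A) + Im(A)‖^{2r} + (1/2)‖Re(A) − Im(A)‖^{2r} )^{1/r} ≤ w²(A). -/

import Mathlib

open scoped InnerProductSpace
open ContinuousLinearMap

/-- The numerical radius of a bounded linear operator. -/
noncomputable def numRadius {H : Type*} [NormedAddCommGroup H] [InnerProductSpace ℂ H]
    (A : H →L[ℂ] H) : ℝ :=
  sSup {r : ℝ | ∃ x : H, ‖x‖ = 1 ∧ r = ‖⟪A x, x⟫_ℂ‖}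

/-- The Crawford number of a bounded linear operator. -/
noncomputable def crawford {H : Type*} [NormedAddCommGroup H] [InnerProductSpace ℂ H]
    (A : H →L[ℂ] H) : ℝ :=
  sInf {r : ℝ | ∃ x : H, ‖x‖ = 1 ∧ r = ‖⟪A x, x⟫_ℂ‖}

/-- The real part of a bounded linear operator. -/
noncomputable def reP {H : Type*} [NormedAddCommGroup H] [InnerProductSpace ℂ H]
    [CompleteSpace H] (A : H →L[ℂ] H) : H →L[ℂ] H :=
  ((2 : ℂ)⁻¹) • (A + adjoint A)

/-- The imaginary part of a bounded linear operator. -/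
noncomputable def imP {H : Type*} [NormedAddCommGroup H] [InnerProductSpace ℂ H]
    [CompleteSpace H] (A : H →L[ℂ] H) : H →L[ℂ] H :=
  ((2 * Complex.I)⁻¹) • (A - adjoint A)

/-!
`Re A ± Im A` are the real parts of `(1 ∓ i) A`, so they are self-adjoint with quadratic forms
bounded by `√2 |⟨Ax, x⟩|`; hence `‖Re A ± Im A‖² ≤ 2 w(A)²`. On the other hand
`(Re A + Im A)² + (Re A - Im A)² = A*A + AA*`, so `‖A*A + AA*‖ ≤ ‖Re A + Im A‖² + ‖Re A - Im A‖²`.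
Both inequalities then follow by comparing the arithmetic mean and the power mean of exponent `r`
of `‖Re A + Im A‖²` and `‖Re A - Im A‖²` with their maximum.
-/

section NumericalRadius

variable {H : Type*} [NormedAddCommGroup H] [InnerProductSpace ℂ H]

theorem numRadius_nonneg (A : H →L[ℂ] H) : 0 ≤ numRadius A :=
  Real.sSup_nonneg <| by rintro _ ⟨x, -, rfl⟩; positivity

theorem norm_inner_self_le_numRadius (A : H →L[ℂ] H) {x : H} (hx : ‖x‖ = 1) :
    ‖⟪A x, x⟫_ℂ‖ ≤ numRadius A := by
  refine le_csSup ⟨‖A‖, ?_⟩ ⟨x, hx, rfl⟩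
  rintro _ ⟨y, hy, rfl⟩
  calc ‖⟪A y, y⟫_ℂ‖ ≤ ‖A y‖ * ‖y‖ := norm_inner_le_norm _ _
    _ ≤ ‖A‖ * ‖y‖ * ‖y‖ := by gcongr; exact A.le_opNorm y
    _ = ‖A‖ := by rw [hy, mul_one, mul_one]

theorem numRadius_le_of_norm_inner_self_le {A : H →L[ℂ] H} {M : ℝ} (hM : 0 ≤ M)
    (h : ∀ x : H, ‖x‖ = 1 → ‖⟪A x, x⟫_ℂ‖ ≤ M) : numRadius A ≤ M :=
  Real.sSup_le (by rintro _ ⟨x, hx, rfl⟩; exact h x hx) hM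

theorem numRadius_smul_le (c : ℂ) (A : H →L[ℂ] H) :
    numRadius (c • A) ≤ ‖c‖ * numRadius A := by
  refine numRadius_le_of_norm_inner_self_le (by positivity [numRadius_nonneg A]) fun x hx ↦ ?_
  rw [smul_apply, inner_smul_left, norm_mul, RCLike.norm_conj]
  gcongr
  exact norm_inner_self_le_numRadius A hx

theorem norm_le_of_isSymmetric_of_norm_inner_self_le {S : H →L[ℂ] H}
    (hS : (S : H →ₗ[ℂ] H).IsSymmetric) {M : ℝ} (hM : 0 ≤ M)
    (h : ∀ x : H, ‖x‖ = 1 → ‖⟪S x, x⟫_ℂ‖ ≤ M) : ‖S‖ ≤ M := by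
  rw [S.norm_eq_iSup_rayleighQuotient hS]
  refine ciSup_le fun x ↦ ?_
  rcases eq_or_ne x 0 with rfl | hx
  · simpa using hM
  have hx' : ‖x‖ ≠ 0 := norm_ne_zero_iff.2 hx
  have hunit : ‖((‖x‖⁻¹ : ℝ) : ℂ) • x‖ = 1 := by
    rw [norm_smul, Complex.norm_real, norm_inv, norm_norm, inv_mul_cancel₀ hx']
  rw [← S.rayleigh_smul x (c := ((‖x‖⁻¹ : ℝ) : ℂ)) (by simpa using hx'), rayleighQuotient,
    hunit, one_pow, div_one, reApplyInnerSelf_apply]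
  exact (RCLike.abs_re_le_norm _).trans (h _ hunit)

end NumericalRadius

section CartesianDecomposition

variable {H : Type*} [NormedAddCommGroup H] [InnerProductSpace ℂ H] [CompleteSpace H]

theorem isSelfAdjoint_reP (A : H →L[ℂ] H) : IsSelfAdjoint (reP A) := by
  rw [isSelfAdjoint_iff', reP, map_smulₛₗ, map_add, adjoint_adjoint, add_comm]
  simp [map_ofNat]

theorem inner_reP_apply_self (A : H →L[ℂ] H) (x : H) :
    ⟪reP A x, x⟫_ℂ = ((⟪A x, x⟫_ℂ).re : ℂ) := by
  rw [reP, smul_apply, add_apply, inner_smul_left, inner_add_left, adjoint_inner_left,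
    ← inner_conj_symm x (A x), Complex.add_conj]
  simp [map_ofNat]

theorem reP_add_imP (A : H →L[ℂ] H) : reP A + imP A = reP ((1 - Complex.I) • A) := by
  simp only [reP, imP, map_smulₛₗ, Complex.conj_I, map_sub, map_one]
  match_scalars <;> simp [Complex.ext_iff]

theorem reP_sub_imP (A : H →L[ℂ] H) : reP A - imP A = reP ((1 + Complex.I) • A) := by
  simp only [reP, imP, map_smulₛₗ, Complex.conj_I, map_add, map_one]
  match_scalars <;> simp [Complex.ext_iff]

theorem sq_reP_add_imP_add_sq_reP_sub_imP (A : H →L[ℂ] H) :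
    (reP A + imP A) ^ 2 + (reP A - imP A) ^ 2 = adjoint A * A + A * adjoint A := by
  simp only [reP, imP, sq, smul_add, smul_sub, mul_add, add_mul, mul_sub, sub_mul,
    smul_mul_assoc, mul_smul_comm, smul_smul]
  match_scalars <;> simp [Complex.ext_iff] <;> ring

theorem norm_adjoint_mul_self_add_self_mul_adjoint_le (A : H →L[ℂ] H) :
    ‖adjoint A * A + A * adjoint A‖ ≤ ‖reP A + imP A‖ ^ 2 + ‖reP A - imP A‖ ^ 2 := by
  rw [← sq_reP_add_imP_add_sq_reP_sub_imP]
  exact (norm_add_le _ _).trans (add_le_add (norm_pow_le' _ two_pos) (norm_pow_le' _ two_pos))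

theorem norm_reP_le_numRadius (A : H →L[ℂ] H) : ‖reP A‖ ≤ numRadius A := by
  refine norm_le_of_isSymmetric_of_norm_inner_self_le (isSelfAdjoint_reP A).isSymmetric
    (numRadius_nonneg A) fun x hx ↦ ?_
  rw [inner_reP_apply_self, Complex.norm_real, Real.norm_eq_abs]
  exact (Complex.abs_re_le_norm _).trans (norm_inner_self_le_numRadius A hx)

theorem sq_norm_reP_smul_le (c : ℂ) (A : H →L[ℂ] H) :
    ‖reP (c • A)‖ ^ 2 ≤ ‖c‖ ^ 2 * numRadius A ^ 2 := by
  rw [← mul_pow]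
  gcongr
  exact (norm_reP_le_numRadius _).trans (numRadius_smul_le c A)

theorem sq_norm_reP_add_imP_le (A : H →L[ℂ] H) :
    ‖reP A + imP A‖ ^ 2 ≤ 2 * numRadius A ^ 2 := by
  simpa [reP_add_imP, Complex.sq_norm, Complex.normSq_apply, one_add_one_eq_two] using
    sq_norm_reP_smul_le (1 - Complex.I) A

theorem sq_norm_reP_sub_imP_le (A : H →L[ℂ] H) :
    ‖reP A - imP A‖ ^ 2 ≤ 2 * numRadius A ^ 2 := by
  simpa [reP_sub_imP, Complex.sq_norm, Complex.normSq_apply, one_add_one_eq_two] using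
    sq_norm_reP_smul_le (1 + Complex.I) A

end CartesianDecomposition

section PowerMean

theorem half_add_half_le_rpow_mean {u v p : ℝ} (hu : 0 ≤ u) (hv : 0 ≤ v) (hp : 1 ≤ p) :
    (1/2 : ℝ) * u + (1/2 : ℝ) * v ≤ ((1/2 : ℝ) * u ^ p + (1/2 : ℝ) * v ^ p) ^ (1 / p) := by
  simpa [Fin.sum_univ_two] using Real.arith_mean_le_rpow_mean Finset.univ ![1/2, 1/2] ![u, v]
    (by simp [Fin.forall_fin_two]) (by norm_num [Fin.sum_univ_two])
    (by simp [Fin.forall_fin_two, hu, hv]) hp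

theorem rpow_mean_le_of_le {u v M p : ℝ} (hu : 0 ≤ u) (hv : 0 ≤ v) (hp : 0 < p)
    (huM : u ≤ M) (hvM : v ≤ M) :
    ((1/2 : ℝ) * u ^ p + (1/2 : ℝ) * v ^ p) ^ (1 / p) ≤ M := by
  have hM : 0 ≤ M := hu.trans huM
  have hmean : (1/2 : ℝ) * u ^ p + (1/2 : ℝ) * v ^ p ≤ M ^ p := by
    have := Real.rpow_le_rpow hu huM hp.le
    have := Real.rpow_le_rpow hv hvM hp.le
    linarith
  calc ((1/2 : ℝ) * u ^ p + (1/2 : ℝ) * v ^ p) ^ (1 / p) ≤ (M ^ p) ^ (1 / p) := by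
        gcongr
    _ = M := by rw [one_div, Real.rpow_rpow_inv hM hp.ne']

end PowerMean

theorem stmt8_general {H : Type*} [NormedAddCommGroup H] [InnerProductSpace ℂ H]
    [CompleteSpace H] (A : H →L[ℂ] H) (r : ℝ) (hr : 1 ≤ r) :
    (1/4 : ℝ) * ‖adjoint A * A + A * adjoint A‖ ≤
        (1/2 : ℝ) * ((1/2 : ℝ) * ‖reP A + imP A‖ ^ (2 * r) +
          (1/2 : ℝ) * ‖reP A - imP A‖ ^ (2 * r)) ^ (1 / r) ∧
    (1/2 : ℝ) * ((1/2 : ℝ) * ‖reP A + imP A‖ ^ (2 * r) +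
        (1/2 : ℝ) * ‖reP A - imP A‖ ^ (2 * r)) ^ (1 / r) ≤ numRadius A ^ 2 := by
  have hsq (S : H →L[ℂ] H) : ‖S‖ ^ (2 * r) = (‖S‖ ^ 2) ^ r := by
    rw [Real.rpow_mul (norm_nonneg S), Real.rpow_two]
  rw [hsq, hsq]
  constructor
  · calc (1/4 : ℝ) * ‖adjoint A * A + A * adjoint A‖
        ≤ (1/4 : ℝ) * (‖reP A + imP A‖ ^ 2 + ‖reP A - imP A‖ ^ 2) := by
          gcongr; exact norm_adjoint_mul_self_add_self_mul_adjoint_le A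
      _ = (1/2 : ℝ) * ((1/2 : ℝ) * ‖reP A + imP A‖ ^ 2 + (1/2 : ℝ) * ‖reP A - imP A‖ ^ 2) := by
          ring
      _ ≤ _ := by gcongr; exact half_add_half_le_rpow_mean (by positivity) (by positivity) hr
  · have := rpow_mean_le_of_le (by positivity) (by positivity) (by linarith : (0 : ℝ) < r)
      (sq_norm_reP_add_imP_le A) (sq_norm_reP_sub_imP_le A)
    linarith

theorem stmt8 {H : Type*} [NormedAddCommGroup H] [InnerProductSpace ℂ H]
    [CompleteSpace H] [Nontrivial H] (A : H →L[ℂ] H) (r : ℝ) (hr : 1 ≤ r) :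
    (1/4 : ℝ) * ‖adjoint A * A + A * adjoint A‖ ≤
        (1/2 : ℝ) * ((1/2 : ℝ) * ‖reP A + imP A‖ ^ (2 * r) +
          (1/2 : ℝ) * ‖reP A - imP A‖ ^ (2 * r)) ^ (1 / r) ∧
    (1/2 : ℝ) * ((1/2 : ℝ) * ‖reP A + imP A‖ ^ (2 * r) +
        (1/2 : ℝ) * ‖reP A - imP A‖ ^ (2 * r)) ^ (1 / r) ≤ numRadius A ^ 2 :=
  stmt8_general A r hr
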